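/- arXiv:1512.06679 — 5 statements merged into one kernel-verified Lean document; each statement's English description precedes it below -/
import Mathlib

section
/- For Brownian input in Regime I, the two-dimensional Laplace transform expression converges as ε ↓ 0: with φ(s)=½σ²s²+rs and ψ its inverse, the quantity (ε²s₂/(εs₂ - ψ(εs₂(r-ε)))) · ((ψ(εs₂(r-ε)) - s₁)/((r-ε)s₂ε - φ(s₁))) tends to (2r/σ²)/(2r/σ² + s₁) · (2/σ²)/(2/σ² + s₂) as ε ↓ 0, for any fixed s₁, s₂ > 0. -/
open Real Filter Topology

/-- Brownian Regime I heavy-traffic limit of the two-dimensional transform. -/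
theorem stmt_1 (r σ s₁ s₂ : ℝ) (hr : 0 < r) (hσ : 0 < σ) (hs₁ : 0 < s₁) (hs₂ : 0 < s₂)
    (φ ψ : ℝ → ℝ)
    (hφ : ∀ s, φ s = σ^2 / 2 * s^2 + r * s)
    (hψ : ∀ s, ψ s = -r / σ^2 + (1/σ) * Real.sqrt (r^2 / σ^2 + 2*s)) :
    Tendsto (fun ε : ℝ =>
        (ε^2 * s₂ / (ε * s₂ - ψ (ε * s₂ * (r - ε)))) *
        ((ψ (ε * s₂ * (r - ε)) - s₁) / ((r - ε) * s₂ * ε - φ s₁)))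
      (𝓝[>] 0)
      (𝓝 ((2*r/σ^2) / (2*r/σ^2 + s₁) * ((2/σ^2) / (2/σ^2 + s₂)))) := by
  have hσ2 : (0:ℝ) < σ^2 := by positivity
  have hσ0 : σ ≠ 0 := hσ.ne'
  have hsq : Real.sqrt (r^2/σ^2) = r/σ := by
    rw [show r^2/σ^2 = (r/σ)^2 by ring, Real.sqrt_sq (by positivity)]
  have hφs : 0 < σ^2/2*s₁^2 + r*s₁ := by positivity
  simp only [hψ, hφ]
  set g : ℝ → ℝ := fun ε =>
    ((ε*s₂ + r/σ^2 + (1/σ) * Real.sqrt (r^2/σ^2 + 2*(ε*s₂*(r-ε)))) / (s₂ + 2/σ^2)) *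
    ((-r / σ^2 + (1/σ) * Real.sqrt (r^2 / σ^2 + 2*(ε * s₂ * (r - ε))) - s₁) /
      ((r - ε) * s₂ * ε - (σ^2 / 2 * s₁^2 + r * s₁))) with hg
  have c1 : Continuous (fun ε:ℝ => ε*s₂ + r/σ^2 + (1/σ)*Real.sqrt (r^2/σ^2+2*(ε*s₂*(r-ε)))) := by
    fun_prop
  have hT1 : Tendsto (fun ε:ℝ => ε*s₂ + r/σ^2 + (1/σ)*Real.sqrt (r^2/σ^2+2*(ε*s₂*(r-ε))))
      (𝓝 (0:ℝ)) (𝓝 (2*r/σ^2)) := by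
    have h := c1.tendsto 0
    have e : (0:ℝ)*s₂ + r/σ^2 + (1/σ)*Real.sqrt (r^2/σ^2+2*((0:ℝ)*s₂*(r-0))) = 2*r/σ^2 := by
      norm_num [hsq]
      field_simp
      ring
    rwa [e] at h
  have hT2 : Tendsto (fun ε:ℝ => -r / σ^2 + (1/σ) * Real.sqrt (r^2/σ^2 + 2*(ε*s₂*(r-ε))) - s₁)
      (𝓝 (0:ℝ)) (𝓝 (-s₁)) := by
    have c2 : Continuous (fun ε:ℝ => -r / σ^2 + (1/σ) * Real.sqrt (r^2/σ^2 + 2*(ε*s₂*(r-ε))) - s₁) := by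
      fun_prop
    have h := c2.tendsto 0
    have e : -r / σ^2 + (1/σ) * Real.sqrt (r^2/σ^2 + 2*((0:ℝ)*s₂*(r-0))) - s₁ = -s₁ := by
      norm_num [hsq]
      field_simp
      ring
    rwa [e] at h
  have hT3 : Tendsto (fun ε:ℝ => (r - ε) * s₂ * ε - (σ^2 / 2 * s₁^2 + r * s₁))
      (𝓝 (0:ℝ)) (𝓝 (-(σ^2/2*s₁^2 + r*s₁))) := by
    have c3 : Continuous (fun ε:ℝ => (r - ε) * s₂ * ε - (σ^2 / 2 * s₁^2 + r * s₁)) := by fun_prop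
    have h := c3.tendsto 0
    have e : (r - 0) * s₂ * 0 - (σ^2 / 2 * s₁^2 + r * s₁) = -(σ^2/2*s₁^2 + r*s₁) := by ring
    rwa [e] at h
  have hTg : Tendsto g (𝓝[>] (0:ℝ))
      (𝓝 ((2*r/σ^2) / (2*r/σ^2 + s₁) * ((2/σ^2) / (2/σ^2 + s₂)))) := by
    have h : Tendsto g (𝓝 (0:ℝ))
        (𝓝 ((2*r/σ^2)/(s₂ + 2/σ^2) * (-s₁ / -(σ^2/2*s₁^2 + r*s₁)))) :=
      (hT1.div_const _).mul (hT2.div hT3 (neg_ne_zero.2 hφs.ne'))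
    have e : (2*r/σ^2)/(s₂ + 2/σ^2) * (-s₁ / -(σ^2/2*s₁^2 + r*s₁))
        = (2*r/σ^2) / (2*r/σ^2 + s₁) * ((2/σ^2) / (2/σ^2 + s₂)) := by
      rw [neg_div_neg_eq]
      field_simp
      ring
    rw [e] at h
    exact h.mono_left nhdsWithin_le_nhds
  refine hTg.congr' ?_
  filter_upwards [Ioo_mem_nhdsGT_of_mem (Set.left_mem_Ico.2 hr)] with ε hε
  obtain ⟨hε0, hεr⟩ := hε
  have hrε : 0 < r - ε := sub_pos.2 hεr
  have hu : 0 ≤ ε*s₂*(r-ε) := by positivity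
  have hc : 0 ≤ r^2/σ^2 + 2*(ε*s₂*(r-ε)) := by positivity
  set q := Real.sqrt (r^2/σ^2 + 2*(ε*s₂*(r-ε))) with hqdef
  have hq0 : 0 ≤ q := Real.sqrt_nonneg _
  have hq2 : q^2 = r^2/σ^2 + 2*(ε*s₂*(r-ε)) := Real.sq_sqrt hc
  have hab : 0 < ε*s₂ + r/σ^2 + (1/σ)*q := by
    have h1 : 0 < ε*s₂ := mul_pos hε0 hs₂
    have h2 : 0 ≤ (1/σ)*q := by positivity
    have h3 : 0 < r/σ^2 := by positivity
    linarith
  have key : (ε*s₂ + r/σ^2 - (1/σ)*q) * (ε*s₂ + r/σ^2 + (1/σ)*q)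
      = ε^2*s₂*(s₂+2/σ^2) := by
    have h : (1/σ)^2 * q^2 = (1/σ)^2 * (r^2/σ^2 + 2*(ε*s₂*(r-ε))) := by rw [hq2]
    field_simp at h ⊢
    nlinarith [h]
  have hden : ε*s₂ - (-r / σ^2 + (1/σ) * q)
      = ε^2*s₂*(s₂+2/σ^2) / (ε*s₂ + r/σ^2 + (1/σ)*q) := by
    rw [eq_div_iff hab.ne']
    linear_combination key
  rw [hg]
  simp only
  rw [hden]
  congr 1
  rw [div_div_eq_mul_div]
  rw [div_eq_div_iff (by positivity) (by positivity : (0:ℝ) < ε^2*s₂*(s₂+2/σ^2)).ne']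
  ring
end

section
/- Asymptotic inverse expansion (Lemma on ψ, Regime I): Suppose φ(s) = sr + ½σ²s² + K₁s^{η₁} + o(s^{η₁}) as s ↓ 0, with r, σ > 0, K₁ ∈ ℝ, η₁ > 2, and let ψ be the (local) inverse of φ with ψ(0)=0. Then for each fixed s > 0, as ε ↓ 0, ψ(sε(r-ε)) = sε - (1/r)sε² - (σ²/(2r))s²ε² + o(ε²). -/
open Real Filter Topology Asymptotics

/-!
Write `u = ψ(sε(r - ε))`. Since `φ` is strictly increasing with `φ 0 = 0`, `u → 0⁺`, and
`φ(u) = ur + ½σ²u² + R(u)` with `R(x) = o(x²)`. Hence `φ(u)/u → r`, so `u/ε → s`, and solving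
`φ(u) = sε(r - ε)` for the linear term gives exactly
`u - (sε - sε²/r - σ²s²ε²/(2r)) = -(σ²/(2r))(u² - s²ε²) - R(u)/r`,
where both terms on the right are `o(ε²)` because `u = sε + o(ε)`.
-/

theorem isLittleO_rpow_sq_nhdsGT_zero {η : ℝ} (hη : 2 < η) :
    (fun x : ℝ => x ^ η) =o[𝓝[>] 0] fun x => x ^ 2 := by
  have hpow : Tendsto (fun x : ℝ => x ^ (η - 2)) (𝓝[>] 0) (𝓝 0) := by
    have := (continuousAt_rpow_const 0 (η - 2) (Or.inr (by linarith))).tendsto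
    rw [zero_rpow (by linarith)] at this
    exact this.mono_left nhdsWithin_le_nhds
  refine (isLittleO_iff_tendsto' ?_).2 (hpow.congr' ?_)
  · filter_upwards [self_mem_nhdsWithin] with x (hx : 0 < x) h
    exact absurd h (by positivity)
  · filter_upwards [self_mem_nhdsWithin] with x (hx : 0 < x)
    rw [← rpow_natCast x 2, ← rpow_sub hx, Nat.cast_ofNat]

theorem StrictMonoOn.tendsto_rightInverse_nhdsGT_zero {φ ψ : ℝ → ℝ} {δ : ℝ}
    (hmono : StrictMonoOn φ (Set.Ico 0 δ)) (hφ0 : φ 0 = 0)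
    (hψ : ∀ᶠ y in 𝓝[>] (0:ℝ), ψ y ∈ Set.Ico 0 δ ∧ φ (ψ y) = y) :
    Tendsto ψ (𝓝[>] 0) (𝓝[>] 0) := by
  obtain ⟨y₀, hy₀, -⟩ := hψ.exists
  have hδ : 0 < δ := hy₀.1.trans_lt hy₀.2
  have h0 : (0:ℝ) ∈ Set.Ico 0 δ := ⟨le_rfl, hδ⟩
  refine tendsto_nhdsWithin_iff.2 ⟨tendsto_order.2 ⟨fun a ha => ?_, fun a ha => ?_⟩, ?_⟩
  · filter_upwards [hψ] with y hy using ha.trans_le hy.1.1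
  · obtain ⟨b, hb0, hb⟩ := exists_between (lt_min ha hδ)
    have hb_mem : b ∈ Set.Ico 0 δ := ⟨hb0.le, hb.trans_le (min_le_right _ _)⟩
    have hφb : 0 < φ b := hφ0 ▸ hmono h0 hb_mem hb0
    filter_upwards [hψ, eventually_nhdsWithin_of_eventually_nhds (eventually_lt_nhds hφb)]
      with y ⟨hmem, hy⟩ hyb
    have : ψ y < b := (hmono.lt_iff_lt hmem hb_mem).1 (by rwa [hy])
    exact this.trans (hb.trans_le (min_le_left _ _))
  · filter_upwards [hψ, self_mem_nhdsWithin] with y ⟨hmem, hy⟩ (hy0 : 0 < y)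
    refine hmem.1.lt_of_ne fun h => hy0.ne ?_
    rw [← hy, ← h, hφ0]

section QuadraticExpansion

variable {φ u : ℝ → ℝ} {r c s : ℝ}

theorem tendsto_div_self_of_isLittleO_sq
    (hR : (fun x => φ x - (x * r + c * x ^ 2)) =o[𝓝[>] 0] fun x => x ^ 2) :
    Tendsto (fun x => φ x / x) (𝓝[>] 0) (𝓝 r) := by
  have hsq : (fun x : ℝ => x ^ 2) =o[𝓝[>] 0] fun x => x :=
    (isLittleO_pow_id one_lt_two).mono nhdsWithin_le_nhds
  have hlin : (fun x => φ x - x * r) =o[𝓝[>] 0] fun x => x :=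
    ((hR.trans hsq).add (hsq.const_mul_left c)).congr_left fun x => by ring
  have := ((isLittleO_iff_tendsto' ?_).1 hlin).add_const r
  · rw [zero_add] at this
    refine this.congr' ?_
    filter_upwards [self_mem_nhdsWithin] with x (hx : 0 < x)
    field_simp
    ring
  · filter_upwards [self_mem_nhdsWithin] with x (hx : 0 < x) h
    exact absurd h hx.ne'

theorem tendsto_div_of_eq_mul_sub
    (hr : r ≠ 0) (hR : (fun x => φ x - (x * r + c * x ^ 2)) =o[𝓝[>] 0] fun x => x ^ 2)
    (hu : Tendsto u (𝓝[>] 0) (𝓝[>] 0)) (heq : ∀ᶠ ε in 𝓝[>] 0, φ (u ε) = s * ε * (r - ε)) :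
    Tendsto (fun ε => u ε / ε) (𝓝[>] 0) (𝓝 s) := by
  have hratio := (tendsto_div_self_of_isLittleO_sq hR).comp hu
  have hlim : Tendsto (fun ε : ℝ => s * (r - ε)) (𝓝[>] 0) (𝓝 (s * (r - 0))) :=
    ((continuous_const.mul (continuous_const.sub continuous_id)).tendsto 0).mono_left
      nhdsWithin_le_nhds
  have := hlim.div hratio hr
  rw [sub_zero, mul_div_cancel_right₀ _ hr] at this
  refine this.congr' ?_
  filter_upwards [heq, hu.eventually self_mem_nhdsWithin, self_mem_nhdsWithin,
    hratio.eventually_ne hr] with ε hε (hu0 : 0 < u ε) (hε0 : 0 < ε) hne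
  have hφ : φ (u ε) ≠ 0 := (div_ne_zero_iff.1 hne).1
  simp only [Pi.div_apply, Function.comp_apply]
  field_simp
  rw [hε]

theorem isLittleO_sub_quadratic_of_eq_mul_sub
    (hr : r ≠ 0) (hR : (fun x => φ x - (x * r + c * x ^ 2)) =o[𝓝[>] 0] fun x => x ^ 2)
    (hu : Tendsto u (𝓝[>] 0) (𝓝[>] 0)) (heq : ∀ᶠ ε in 𝓝[>] 0, φ (u ε) = s * ε * (r - ε)) :
    (fun ε => u ε - (s * ε - (1 / r) * s * ε ^ 2 - (c / r) * s ^ 2 * ε ^ 2)) =o[𝓝[>] 0]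
      fun ε => ε ^ 2 := by
  have hdiv := tendsto_div_of_eq_mul_sub hr hR hu heq
  have hε0 : ∀ᶠ ε in 𝓝[>] (0:ℝ), ε ≠ 0 := eventually_mem_nhdsWithin.mono fun ε h => ne_of_gt h
  have hvanish : ∀ᶠ ε in 𝓝[>] (0:ℝ), ε = 0 → u ε = 0 := hε0.mono fun ε h h' => absurd h' h
  have hbig : u =O[𝓝[>] 0] fun ε => ε := isBigO_of_div_tendsto_nhds hvanish s hdiv
  have hlin : (fun ε => u ε - s * ε) =o[𝓝[>] 0] fun ε => ε := by
    refine (isLittleO_iff_tendsto' (hε0.mono fun ε h h' => absurd h' h)).2 ?_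
    have := hdiv.sub_const s
    rw [sub_self] at this
    refine this.congr' ?_
    filter_upwards [hε0] with ε hε
    field_simp
  have hsq : (fun ε => u ε ^ 2 - s ^ 2 * ε ^ 2) =o[𝓝[>] 0] fun ε => ε ^ 2 :=
    (hlin.mul_isBigO (hbig.add (isBigO_const_mul_self s _ _))).congr (fun ε => by ring)
      fun ε => by ring
  have hrem : (fun ε => φ (u ε) - (u ε * r + c * u ε ^ 2)) =o[𝓝[>] 0] fun ε => ε ^ 2 :=
    (hR.comp_tendsto hu).trans_isBigO (hbig.pow 2)
  refine ((hsq.const_mul_left (-(c / r))).sub (hrem.const_mul_left (1 / r))).congr' ?_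
    EventuallyEq.rfl
  filter_upwards [heq] with ε hε
  rw [hε]
  field_simp
  ring

end QuadraticExpansion

theorem stmt_8_general (r σ K₁ η₁ δ : ℝ) (hr : 0 < r) (hη : 2 < η₁)
    (φ ψ : ℝ → ℝ)
    (hmono : StrictMonoOn φ (Set.Ico 0 δ)) (hφ0 : φ 0 = 0)
    (hexp : (fun x => φ x - (x*r + σ^2/2 * x^2 + K₁ * x ^ η₁)) =o[𝓝[>] 0]
      fun x => x ^ η₁)
    (hψ : ∀ᶠ y in 𝓝[>] (0:ℝ), ψ y ∈ Set.Ico 0 δ ∧ φ (ψ y) = y)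
    (s : ℝ) (hs : 0 < s) :
    (fun ε : ℝ => ψ (s*ε*(r-ε)) - (s*ε - (1/r)*s*ε^2 - (σ^2/(2*r))*s^2*ε^2)) =o[𝓝[>] 0]
      fun ε => ε^2 := by
  have hrpow := isLittleO_rpow_sq_nhdsGT_zero hη
  have hR : (fun x => φ x - (x * r + σ ^ 2 / 2 * x ^ 2)) =o[𝓝[>] 0] fun x => x ^ 2 :=
    ((hexp.trans hrpow).add (hrpow.const_mul_left K₁)).congr_left fun x => by ring
  have hy : Tendsto (fun ε => s * ε * (r - ε)) (𝓝[>] 0) (𝓝[>] 0) := by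
    refine tendsto_nhdsWithin_iff.2 ⟨?_, ?_⟩
    · have : Tendsto (fun ε => s * ε * (r - ε)) (𝓝 0) (𝓝 (s * 0 * (r - 0))) :=
        Continuous.tendsto (by fun_prop) 0
      simpa using this.mono_left nhdsWithin_le_nhds
    · filter_upwards [self_mem_nhdsWithin,
        eventually_nhdsWithin_of_eventually_nhds (eventually_lt_nhds hr)] with ε (hε : 0 < ε) hεr
      exact mul_pos (mul_pos hs hε) (sub_pos.2 hεr)
  have hu := (hmono.tendsto_rightInverse_nhdsGT_zero hφ0 hψ).comp hy
  have heq := hy.eventually (hψ.mono fun _ h => h.2)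
  simpa only [div_div, Function.comp_apply] using
    isLittleO_sub_quadratic_of_eq_mul_sub hr.ne' hR hu heq

/-- Lemma on ψ, Regime I: if φ(s) = sr + ½σ²s² + K₁s^{η₁} + o(s^{η₁}) as
s ↓ 0 with η₁ > 2, and ψ is a (local) inverse of φ with ψ(0) = 0, then for fixed s > 0,
ψ(sε(r-ε)) = sε - (1/r)sε² - (σ²/(2r))s²ε² + o(ε²) as ε ↓ 0. -/
theorem stmt_8 (r σ K₁ η₁ δ : ℝ) (hr : 0 < r) (hσ : 0 < σ) (hη : 2 < η₁) (hδ : 0 < δ)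
    (φ ψ : ℝ → ℝ)
    (hmono : StrictMonoOn φ (Set.Ico 0 δ)) (hφ0 : φ 0 = 0)
    (hexp : (fun x => φ x - (x*r + σ^2/2 * x^2 + K₁ * x ^ η₁)) =o[𝓝[>] 0]
      fun x => x ^ η₁)
    (hψ0 : ψ 0 = 0)
    (hψ : ∀ᶠ y in 𝓝[>] (0:ℝ), ψ y ∈ Set.Ico 0 δ ∧ φ (ψ y) = y)
    (s : ℝ) (hs : 0 < s) :
    (fun ε : ℝ => ψ (s*ε*(r-ε)) - (s*ε - (1/r)*s*ε^2 - (σ^2/(2*r))*s^2*ε^2)) =o[𝓝[>] 0]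
      fun ε => ε^2 :=
  stmt_8_general r σ K₁ η₁ δ hr hη φ ψ hmono hφ0 hexp hψ s hs
end

section
/- Verification of Regime II expansion: define ψ̃(ε) = -ε + ε√(1+2s(γ-1)) + K₂(s)ε^{η₁-1} where K₂(s) = -K₁(-1+√(1+2s(γ-1)))^{η₁}/√(1+2s(γ-1)). Then for φ(x) = xε + ½x² + K₁x^{η₁}, one has φ(ψ̃(ε)) = sε²(γ-1) + o(ε^{η₁}) as ε ↓ 0, for every fixed s ≥ 0, γ > 1, and 2 < η₁ ≤ 3. -/
open Real Filter Topology Asymptotics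

/-- verification of the Regime II expansion. With
K₂(s) = -K₁(-1+√(1+2s(γ-1)))^{η₁}/√(1+2s(γ-1)) and
ψ̃(ε) = -ε + ε√(1+2s(γ-1)) + K₂(s)ε^{η₁-1}, for φ(x) = xε + ½x² + K₁x^{η₁} one has
φ(ψ̃(ε)) = sε²(γ-1) + o(ε^{η₁}) as ε ↓ 0. -/
theorem stmt_11 (γ K₁ η₁ s : ℝ) (hγ : 1 < γ) (hη : 2 < η₁) (hη' : η₁ ≤ 3) (hs : 0 ≤ s)
    (K₂ : ℝ)
    (hK₂ : K₂ = -K₁ * (-1 + Real.sqrt (1 + 2*s*(γ-1))) ^ η₁ /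
      Real.sqrt (1 + 2*s*(γ-1)))
    (ψt : ℝ → ℝ)
    (hψt : ∀ ε : ℝ, ψt ε = -ε + ε * Real.sqrt (1 + 2*s*(γ-1)) + K₂ * ε ^ (η₁ - 1)) :
    (fun ε : ℝ => (ψt ε * ε + (ψt ε)^2/2 + K₁ * (ψt ε) ^ η₁) - s*ε^2*(γ-1)) =o[𝓝[>] 0]
      fun ε => ε ^ η₁ := by
  set r := Real.sqrt (1 + 2*s*(γ-1)) with hr_def
  have hbase : (1:ℝ) ≤ 1 + 2*s*(γ-1) := by nlinarith
  have hr1 : 1 ≤ r := by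
    rw [hr_def]
    nlinarith [Real.sq_sqrt (by linarith : (0:ℝ) ≤ 1 + 2*s*(γ-1)),
      Real.sqrt_nonneg (1 + 2*s*(γ-1))]
  have hr0 : r ≠ 0 := by linarith
  have hr2 : r ^ 2 = 1 + 2*s*(γ-1) := Real.sq_sqrt (by linarith)
  have ha : (0:ℝ) ≤ r - 1 := by linarith
  have hKr : K₂ * r = -K₁ * (r - 1) ^ η₁ := by
    have hm : (-1 + r) = r - 1 := by ring
    rw [hK₂, hm]
    field_simp
  -- the correction function
  set F : ℝ → ℝ := fun ε => K₂^2/2 * ε^(η₁-2)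
      + K₁ * (((r-1) + K₂*ε^(η₁-2))^η₁ - (r-1)^η₁) with hF_def
  -- ε^(η₁-2) → 0 as ε → 0+
  have t1 : Tendsto (fun ε:ℝ => ε^(η₁-2)) (𝓝[>] (0:ℝ)) (𝓝 0) := by
    have h := (Real.continuousAt_rpow_const 0 (η₁-2) (Or.inr (by linarith))).tendsto
    rw [Real.zero_rpow (by intro h0; linarith [sub_eq_zero.mp h0] : η₁-2 ≠ 0)] at h
    exact h.mono_left nhdsWithin_le_nhds
  have t2 : Tendsto (fun ε:ℝ => (r-1) + K₂*ε^(η₁-2)) (𝓝[>] (0:ℝ)) (𝓝 (r-1)) := by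
    have := (tendsto_const_nhds : Tendsto (fun _:ℝ => r-1) (𝓝[>] (0:ℝ)) (𝓝 (r-1))).add
      (t1.const_mul K₂)
    simpa using this
  have t3 : Tendsto (fun ε:ℝ => ((r-1) + K₂*ε^(η₁-2))^η₁) (𝓝[>] (0:ℝ))
      (𝓝 ((r-1)^η₁)) :=
    ((Real.continuousAt_rpow_const (r-1) η₁ (Or.inr (by linarith))).tendsto).comp t2
  have hFt : Tendsto F (𝓝[>] (0:ℝ)) (𝓝 0) := by
    have := (t1.const_mul (K₂^2/2)).add ((t3.sub (tendsto_const_nhds :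
      Tendsto (fun _:ℝ => (r-1)^η₁) (𝓝[>] (0:ℝ)) (𝓝 ((r-1)^η₁)))).const_mul K₁)
    simpa using this
  -- K₂ = 0 when r = 1
  have hK0 : r - 1 = 0 → K₂ = 0 := by
    intro h
    have h1 : K₂ * r = 0 := by
      rw [hKr, h, Real.zero_rpow (by linarith)]; ring
    exact (mul_eq_zero.mp h1).resolve_right hr0
  -- eventually the inner base is nonnegative
  have hev : ∀ᶠ ε in 𝓝[>] (0:ℝ), 0 ≤ (r-1) + K₂*ε^(η₁-2) := by
    rcases eq_or_lt_of_le ha with h | h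
    · filter_upwards with ε
      rw [← h, hK0 h.symm]
      simp
    · exact t2.eventually (eventually_ge_nhds (by linarith))
  -- eventual identity
  have key : (fun ε : ℝ => (ψt ε * ε + (ψt ε)^2/2 + K₁ * (ψt ε) ^ η₁) - s*ε^2*(γ-1))
      =ᶠ[𝓝[>] (0:ℝ)] (fun ε => ε^η₁ * F ε) := by
    filter_upwards [hev, self_mem_nhdsWithin] with ε h0 hε
    have hε : (0:ℝ) < ε := hε
    have hZ : ε * ε^(η₁-2) = ε^(η₁-1) := by
      rw [show η₁ - 1 = 1 + (η₁-2) by ring, Real.rpow_add hε, Real.rpow_one]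
    have hY : ε^2 * ε^(η₁-2) = ε^η₁ := by
      rw [show ε^2 = ε^(2:ℝ) by rw [← Real.rpow_natCast ε 2]; norm_num,
        ← Real.rpow_add hε]
      norm_num
    have hψε : ψt ε = ε * ((r-1) + K₂*ε^(η₁-2)) := by
      rw [hψt ε, ← hZ]; ring
    have hpow : (ψt ε)^η₁ = ε^η₁ * ((r-1) + K₂*ε^(η₁-2))^η₁ := by
      rw [hψε, Real.mul_rpow hε.le h0]
    rw [hpow, hψε]
    simp only [hF_def]
    linear_combination (ε^2/2) * hr2 + (K₂*r + K₂^2*ε^(η₁-2)/2) * hY + ε^η₁ * hKr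
  have hsmall : (fun ε:ℝ => ε^η₁ * F ε) =o[𝓝[>] (0:ℝ)] fun ε => ε^η₁ := by
    have := (isBigO_refl (fun ε:ℝ => ε^η₁) (𝓝[>] (0:ℝ))).mul_isLittleO
      ((isLittleO_one_iff ℝ).mpr hFt)
    simpa using this
  exact hsmall.congr' key.symm EventuallyEq.rfl
end

section
/- For spectrally positive α-stable input (1 < α < 2) with Laplace exponent φ(s) = rs + Cs^α (r, C > 0), the inverse ψ satisfies ψ(s) = s/r - (C/r)(s/r)^α + o(s^α) as s ↓ 0. -/
open Real Filter Topology Asymptotics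

/-!
Put `x = s / r` and `y = ψ s`. The equation `r y + C y^α = s` reads `y = x - (C/r) y^α`, so the
error `ψ s - (x - (C/r) x^α)` equals `(C/r) (x^α - y^α)`. Since `0 ≤ x - y = (C/r) y^α ≤ (C/r) x^α`,
the mean value theorem bounds it by `α (C/r)^2 x^(α-1) x^α`, which is `o(s^α)` because `α > 1`.
-/

theorem Real.rpow_sub_rpow_le_mul_sub {p a b : ℝ} (hp : 1 ≤ p) (hb : 0 ≤ b) (hba : b ≤ a) :
    a ^ p - b ^ p ≤ p * a ^ (p - 1) * (a - b) := by
  rcases hba.eq_or_lt with rfl | hlt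
  · simp
  have hderiv : ∀ x, HasDerivAt (fun x : ℝ => x ^ p) (p * x ^ (p - 1)) x :=
    fun _ => hasDerivAt_rpow_const (Or.inr hp)
  obtain ⟨c, ⟨hbc, hca⟩, hslope⟩ := exists_hasDerivAt_eq_slope (fun x : ℝ => x ^ p)
    (fun x => p * x ^ (p - 1)) hlt
    (fun x _ => (hderiv x).continuousAt.continuousWithinAt) (fun x _ => hderiv x)
  have hsub : a ^ p - b ^ p = p * c ^ (p - 1) * (a - b) := by
    rw [hslope]
    field_simp [(sub_pos.mpr hlt).ne']
  rw [hsub]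
  gcongr
  exact hb.trans hbc.le

theorem abs_sub_first_order_le_of_linear_add_rpow_eq {α r C s y : ℝ} (hα : 1 ≤ α) (hr : 0 < r)
    (hC : 0 ≤ C) (hy : 0 ≤ y) (hs : r * y + C * y ^ α = s) :
    |y - (s / r - C / r * (s / r) ^ α)| ≤ α * (C / r) ^ 2 * ((s / r) ^ (α - 1) * (s / r) ^ α) := by
  set x := s / r
  have hCr : 0 ≤ C / r := div_nonneg hC hr.le
  have hy_eq : y = x - C / r * y ^ α := by
    simp only [x, ← hs]
    field_simp
    ring
  have hyα : 0 ≤ C / r * y ^ α := mul_nonneg hCr (rpow_nonneg hy α)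
  have hyx : y ≤ x := by linarith
  have hpow : y ^ α ≤ x ^ α := rpow_le_rpow hy hyx (by linarith)
  have herr : y - (x - C / r * x ^ α) = C / r * (x ^ α - y ^ α) := by
    nth_rewrite 1 [hy_eq]
    ring
  have hgap : x - y ≤ C / r * x ^ α := by
    nth_rewrite 1 [hy_eq]
    linarith [mul_le_mul_of_nonneg_left hpow hCr]
  have hmvt := rpow_sub_rpow_le_mul_sub hα hy hyx
  have hx1 : 0 ≤ x ^ (α - 1) := rpow_nonneg (hy.trans hyx) _
  rw [herr, abs_of_nonneg (mul_nonneg hCr (sub_nonneg.mpr hpow))]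
  calc C / r * (x ^ α - y ^ α) ≤ C / r * (α * x ^ (α - 1) * (C / r * x ^ α)) := by
        gcongr
        exact hmvt.trans (by gcongr)
    _ = α * (C / r) ^ 2 * (x ^ (α - 1) * x ^ α) := by ring

theorem isLittleO_rpow_mul_self {a : ℝ} (ha : 0 < a) (f : ℝ → ℝ) :
    (fun x : ℝ => x ^ a * f x) =o[𝓝 0] f := by
  have hzero : (fun x : ℝ => x ^ a) =o[𝓝 0] fun _ => (1 : ℝ) := by
    rw [isLittleO_one_iff]
    simpa [zero_rpow ha.ne'] using (continuousAt_rpow_const 0 a (Or.inr ha.le)).tendsto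
  simpa using hzero.mul_isBigO (isBigO_refl f _)

theorem stmt_16_general (α r C : ℝ) (hα : 1 < α) (hr : 0 < r) (hC : 0 < C)
    (φ ψ : ℝ → ℝ)
    (hφ : ∀ s : ℝ, φ s = r * s + C * s ^ α)
    (hψ : ∀ s : ℝ, 0 ≤ s → 0 ≤ ψ s ∧ φ (ψ s) = s) :
    (fun s : ℝ => ψ s - (s/r - (C/r) * (s/r) ^ α)) =o[𝓝[>] 0] fun s => s ^ α := by
  have hbound : (fun s : ℝ => ψ s - (s/r - (C/r) * (s/r) ^ α))
      =O[𝓝[>] 0] fun s => (s / r) ^ (α - 1) * (s / r) ^ α := by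
    refine IsBigO.of_bound (α * (C / r) ^ 2) (eventually_nhdsWithin_of_forall fun s hs => ?_)
    obtain ⟨hψ0, hψs⟩ := hψ s (le_of_lt hs)
    rw [hφ] at hψs
    have hx : 0 ≤ s / r := div_nonneg (le_of_lt hs) hr.le
    rw [norm_eq_abs, norm_of_nonneg (mul_nonneg (rpow_nonneg hx _) (rpow_nonneg hx _))]
    exact abs_sub_first_order_le_of_linear_add_rpow_eq hα.le hr hC.le hψ0 hψs
  have hdiv : Tendsto (fun s : ℝ => s / r) (𝓝[>] 0) (𝓝 0) := by
    simpa using ((continuous_id.div_const r).tendsto 0).mono_left nhdsWithin_le_nhds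
  have hsmall := (isLittleO_rpow_mul_self (sub_pos.mpr hα) fun x => x ^ α).comp_tendsto hdiv
  have hscale : (fun s : ℝ => (s / r) ^ α) =O[𝓝[>] 0] fun s => s ^ α := by
    refine (isBigO_const_mul_self (r ^ α)⁻¹ _ _).congr' ?_ EventuallyEq.rfl
    filter_upwards [self_mem_nhdsWithin] with s hs
    rw [div_rpow (le_of_lt hs) hr.le, div_eq_inv_mul]
  exact hbound.trans_isLittleO (hsmall.trans_isBigO hscale)

/-- for φ(s) = rs + Cs^α with 1 < α < 2, r, C > 0, the inverse ψ satisfies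
ψ(s) = s/r - (C/r)(s/r)^α + o(s^α) as s ↓ 0. -/
theorem stmt_16 (α r C : ℝ) (hα : 1 < α) (hα2 : α < 2) (hr : 0 < r) (hC : 0 < C)
    (φ ψ : ℝ → ℝ)
    (hφ : ∀ s : ℝ, φ s = r * s + C * s ^ α)
    (hψ : ∀ s : ℝ, 0 ≤ s → 0 ≤ ψ s ∧ φ (ψ s) = s) :
    (fun s : ℝ => ψ s - (s/r - (C/r) * (s/r) ^ α)) =o[𝓝[>] 0] fun s => s ^ α :=
  stmt_16_general α r C hα hr hC φ ψ hφ hψ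
end

section
/- 3/2-stable heavy-traffic marginal: for φ(s) = rs + √2 s^{3/2} with inverse ψ, one has ψ(sε²(r-ε)) = sε² - (1+√(2s))·(sε³/r) + o(ε³) as ε ↓ 0 for fixed s > 0, and consequently (ε/(r-ε)) · ψ(sε²(r-ε))/(sε² - ψ(sε²(r-ε))) → 1/(1+√(2s)) as ε ↓ 0. -/
/-!
Write `y = ψ(sε²(r-ε))`, `u = y/ε²` and `v = (sε² - y)/ε³`, so that `u = s - εv`. Dividing
`r y + √2 y^{3/2} = sε²(r-ε)` by `ε³` gives `r v = s + √2 u^{3/2}`. Hence `v ≥ 0`, so `u ≤ s`, so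
`v ≤ (s + √2 s^{3/2})/r` is bounded; thus `u → s`, and then `v → (s + √2 s^{3/2})/r = (1 + √(2s)) s/r`.
Both claims are these two limits: the error of the expansion is `ε³((1 + √(2s)) s/r - v)`, and the
ratio in the second claim is `u/((r-ε)v)`.
-/

open Real Filter Topology Asymptotics

lemma sq_rpow_three_halves {ε : ℝ} (hε : 0 ≤ ε) : (ε ^ 2) ^ (3 / 2 : ℝ) = ε ^ 3 := by
  rw [← Real.rpow_natCast_mul hε]; norm_num

lemma rpow_three_halves_eq_mul_sqrt {s : ℝ} (hs : 0 ≤ s) : s ^ (3 / 2 : ℝ) = s * √s := by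
  rw [show (3 / 2 : ℝ) = 1 + 1 / 2 by norm_num, Real.rpow_add' hs (by norm_num), Real.rpow_one,
    Real.sqrt_eq_rpow]

lemma div_sq_eq_sub_mul_div_cube (s y : ℝ) {ε : ℝ} (hε : ε ≠ 0) :
    y / ε ^ 2 = s - ε * ((s * ε ^ 2 - y) / ε ^ 3) := by
  field_simp; ring

section ThreeHalvesInverse

variable {r c s : ℝ}

lemma mul_deficit_div_cube_eq {ε y : ℝ} (hε : 0 < ε) (hy : 0 ≤ y)
    (h : r * y + c * y ^ (3 / 2 : ℝ) = s * ε ^ 2 * (r - ε)) :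
    r * ((s * ε ^ 2 - y) / ε ^ 3) = s + c * (y / ε ^ 2) ^ (3 / 2 : ℝ) := by
  rw [Real.div_rpow hy (sq_nonneg ε), sq_rpow_three_halves hε.le]
  field_simp
  linear_combination -h

lemma deficit_div_cube_mem_Icc {ε y : ℝ} (hr : 0 < r) (hc : 0 ≤ c) (hs : 0 ≤ s) (hε : 0 < ε)
    (hy : 0 ≤ y) (h : r * y + c * y ^ (3 / 2 : ℝ) = s * ε ^ 2 * (r - ε)) :
    (s * ε ^ 2 - y) / ε ^ 3 ∈ Set.Icc 0 ((s + c * s ^ (3 / 2 : ℝ)) / r) := by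
  set v := (s * ε ^ 2 - y) / ε ^ 3
  have hrv : r * v = s + c * (y / ε ^ 2) ^ (3 / 2 : ℝ) := mul_deficit_div_cube_eq hε hy h
  have hv : 0 ≤ v := (mul_nonneg_iff_of_pos_left hr).mp (by rw [hrv]; positivity)
  have hus : y / ε ^ 2 ≤ s := by
    rw [div_sq_eq_sub_mul_div_cube s y hε.ne']; nlinarith
  have hpow : (y / ε ^ 2) ^ (3 / 2 : ℝ) ≤ s ^ (3 / 2 : ℝ) :=
    Real.rpow_le_rpow (by positivity) hus (by norm_num)
  refine ⟨hv, (le_div_iff₀' hr).mpr ?_⟩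
  rw [hrv]
  gcongr

variable {y : ℝ → ℝ}

theorem tendsto_root_div_sq (hr : 0 < r) (hc : 0 ≤ c) (hs : 0 ≤ s)
    (hy : ∀ᶠ ε in 𝓝[>] 0, 0 ≤ y ε ∧ r * y ε + c * y ε ^ (3 / 2 : ℝ) = s * ε ^ 2 * (r - ε)) :
    Tendsto (fun ε => y ε / ε ^ 2) (𝓝[>] 0) (𝓝 s) := by
  set K := (s + c * s ^ (3 / 2 : ℝ)) / r
  have hlow : Tendsto (fun ε => s - ε * K) (𝓝[>] 0) (𝓝 s) := by
    have hcont : Continuous fun ε : ℝ => s - ε * K := by fun_prop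
    simpa using (hcont.tendsto 0).mono_left nhdsWithin_le_nhds
  have hbounds : ∀ᶠ ε in 𝓝[>] 0, s - ε * K ≤ y ε / ε ^ 2 ∧ y ε / ε ^ 2 ≤ s := by
    filter_upwards [hy, self_mem_nhdsWithin] with ε ⟨hy0, hyε⟩ (hε : 0 < ε)
    obtain ⟨hv0, hvK⟩ := deficit_div_cube_mem_Icc hr hc hs hε hy0 hyε
    rw [div_sq_eq_sub_mul_div_cube s (y ε) hε.ne']
    constructor <;> nlinarith
  exact tendsto_of_tendsto_of_tendsto_of_le_of_le' hlow tendsto_const_nhds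
    (hbounds.mono fun _ => And.left) (hbounds.mono fun _ => And.right)

theorem tendsto_deficit_div_cube (hr : 0 < r) (hc : 0 ≤ c) (hs : 0 ≤ s)
    (hy : ∀ᶠ ε in 𝓝[>] 0, 0 ≤ y ε ∧ r * y ε + c * y ε ^ (3 / 2 : ℝ) = s * ε ^ 2 * (r - ε)) :
    Tendsto (fun ε => (s * ε ^ 2 - y ε) / ε ^ 3) (𝓝[>] 0)
      (𝓝 ((s + c * s ^ (3 / 2 : ℝ)) / r)) := by
  have hlim : Tendsto (fun ε => (s + c * (y ε / ε ^ 2) ^ (3 / 2 : ℝ)) / r) (𝓝[>] 0)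
      (𝓝 ((s + c * s ^ (3 / 2 : ℝ)) / r)) :=
    (((tendsto_root_div_sq hr hc hs hy).rpow_const (Or.inr (by norm_num))).const_mul c
      |>.const_add s).div_const r
  refine hlim.congr' ?_
  filter_upwards [hy, self_mem_nhdsWithin] with ε ⟨hy0, hyε⟩ (hε : 0 < ε)
  rw [← mul_deficit_div_cube_eq hε hy0 hyε, mul_div_cancel_left₀ _ hr.ne']

end ThreeHalvesInverse

/-- 3/2-stable heavy-traffic marginal: for φ(s) = rs + √2 s^{3/2} with
inverse ψ, ψ(sε²(r-ε)) = sε² - (1+√(2s))·(sε³/r) + o(ε³) as ε ↓ 0, and consequently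
(ε/(r-ε))·ψ(sε²(r-ε))/(sε² - ψ(sε²(r-ε))) → 1/(1+√(2s)). -/
theorem stmt_19 (r s : ℝ) (hr : 0 < r) (hs : 0 < s)
    (φ ψ : ℝ → ℝ)
    (hφ : ∀ x : ℝ, φ x = r * x + Real.sqrt 2 * x ^ (3/2 : ℝ))
    (hψ : ∀ x : ℝ, 0 ≤ x → 0 ≤ ψ x ∧ φ (ψ x) = x) :
    ((fun ε : ℝ => ψ (s*ε^2*(r-ε)) - (s*ε^2 - (1 + Real.sqrt (2*s)) * (s*ε^3/r)))
        =o[𝓝[>] 0] fun ε => ε^3) ∧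
    Tendsto (fun ε : ℝ =>
        (ε/(r-ε)) * (ψ (s*ε^2*(r-ε)) / (s*ε^2 - ψ (s*ε^2*(r-ε)))))
      (𝓝[>] 0) (𝓝 (1 / (1 + Real.sqrt (2*s)))) := by
  set y := fun ε => ψ (s * ε ^ 2 * (r - ε))
  have hy : ∀ᶠ ε in 𝓝[>] 0, 0 ≤ y ε ∧ r * y ε + √2 * y ε ^ (3 / 2 : ℝ) = s * ε ^ 2 * (r - ε) := by
    filter_upwards [Ioo_mem_nhdsGT hr] with ε ⟨hε, hεr⟩
    obtain ⟨hy0, hyε⟩ := hψ (s * ε ^ 2 * (r - ε)) (by have := sub_pos.2 hεr; positivity)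
    exact ⟨hy0, (hφ _).symm.trans hyε⟩
  have hL : (s + √2 * s ^ (3 / 2 : ℝ)) / r = (1 + √(2 * s)) * s / r := by
    rw [rpow_three_halves_eq_mul_sqrt hs.le, Real.sqrt_mul zero_le_two]; ring
  have hv := tendsto_deficit_div_cube hr (Real.sqrt_nonneg 2) hs.le hy
  rw [hL] at hv
  constructor
  · have hsmall := ((isLittleO_one_iff ℝ).mpr (tendsto_sub_nhds_zero_iff.mpr hv)).neg_left
      |>.mul_isBigO (isBigO_refl (fun ε : ℝ => ε ^ 3) (𝓝[>] 0))
    refine hsmall.congr' ?_ (by simp)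
    filter_upwards [self_mem_nhdsWithin] with ε (hε : 0 < ε)
    field_simp
    ring
  · have hsub : Tendsto (fun ε : ℝ => r - ε) (𝓝[>] 0) (𝓝 r) := by
      simpa using ((continuous_sub_left r).tendsto 0).mono_left nhdsWithin_le_nhds
    have hlim := (tendsto_root_div_sq hr (Real.sqrt_nonneg 2) hs.le hy).div (hsub.mul hv)
      (by positivity)
    convert hlim.congr' ?_ using 2
    · field_simp
    filter_upwards [self_mem_nhdsWithin] with ε (hε : 0 < ε)
    simp only [Pi.div_apply, y]
    field_simp
end
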